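/- If an e-merging function F is admissible, then F is upper semicontinuous on [0,∞)^K. -/

import Mathlib

open MeasureTheory
open scoped ENNReal NNReal BigOperators

/-- An e-merging function (arbitrary dependence). -/
def IsEMerging (K : ℕ) (F : (Fin K → ℝ) → ℝ) : Prop :=
  Monotone F ∧ Measurable F ∧ (∀ e, 0 ≤ F e) ∧
  ∀ (Ω : Type) [MeasurableSpace Ω] (Q : Measure Ω), IsProbabilityMeasure Q →
    ∀ E : Fin K → Ω → ℝ, (∀ k, Measurable (E k)) → (∀ k ω, 0 ≤ E k ω) →
      (∀ k, ∫⁻ ω, ENNReal.ofReal (E k ω) ∂Q ≤ 1) →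
      ∫⁻ ω, ENNReal.ofReal (F (fun k => E k ω)) ∂Q ≤ 1

/-- An e-merging function is admissible if no e-merging function strictly dominates it
on `[0,∞)^K`. -/
def IsAdmissibleEMerging (K : ℕ) (F : (Fin K → ℝ) → ℝ) : Prop :=
  IsEMerging K F ∧
  ¬ ∃ G, IsEMerging K G ∧
    (∀ e : Fin K → ℝ, (∀ k, 0 ≤ e k) → F e ≤ G e) ∧
    (∃ e : Fin K → ℝ, (∀ k, 0 ≤ e k) ∧ F e < G e)

/-!
The upper semicontinuous envelope `F*` of an e-merging function `F` is again e-merging: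
`E[F (E + ε)] ≤ 1 + ε`, because mixing the law of `E + ε`, with weight `1 / (1 + ε)`, with a
point mass at `0` gives a family with expectations at most one. Since `F ≤ F*`, admissibility
forces `F = F*` on `[0,∞)^K`, and `F*` is upper semicontinuous.
-/

open Set Filter Topology

section Envelope

variable {ι : Type*} {F : (ι → ℝ) → ℝ}

/-- `F*(e) = lim_{ε ↓ 0} F (e + ε • 1)` for monotone `F`, taken along `ε = 1 / (n + 1)`. -/
noncomputable def uscEnvelope (F : (ι → ℝ) → ℝ) (e : ι → ℝ) : ℝ :=
  ⨅ n : ℕ, F fun k => e k + 1 / (n + 1)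

theorem le_uscEnvelope (hF : Monotone F) (e : ι → ℝ) : F e ≤ uscEnvelope F e :=
  le_ciInf fun _ => hF fun _ => le_add_of_nonneg_right (by positivity)

theorem bddBelow_range_shift (hF : BddBelow (range F)) (e : ι → ℝ) :
    BddBelow (range fun n : ℕ => F fun k => e k + 1 / (n + 1)) :=
  hF.mono (range_comp_subset_range _ F)

theorem uscEnvelope_le (hF : Monotone F) (hF₀ : BddBelow (range F)) {ε : ℝ} (hε : 0 < ε)
    (e : ι → ℝ) : uscEnvelope F e ≤ F fun k => e k + ε := by
  obtain ⟨n, hn⟩ := exists_nat_one_div_lt hε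
  exact (ciInf_le (bddBelow_range_shift hF₀ e) n).trans (hF fun k => by linarith)

theorem monotone_uscEnvelope (hF : Monotone F) (hF₀ : BddBelow (range F)) :
    Monotone (uscEnvelope F) :=
  fun a _ hab => ciInf_mono (bddBelow_range_shift hF₀ a) fun _ => hF fun k => by
    linarith [hab k]

theorem Measurable.uscEnvelope [Countable ι] (hF : Measurable F) :
    Measurable (uscEnvelope F) :=
  .iInf fun _ => hF.comp (measurable_pi_lambda _ fun k => (measurable_pi_apply k).add_const _)

theorem upperSemicontinuous_uscEnvelope [Finite ι] (hF : Monotone F) (hF₀ : BddBelow (range F)) :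
    UpperSemicontinuous (uscEnvelope F) := by
  intro x y hy
  obtain ⟨n, hn⟩ := exists_lt_of_ciInf_lt (f := fun n : ℕ => F fun k => x k + 1 / (n + 1)) hy
  have hε : (0 : ℝ) < 1 / (n + 1) := by positivity
  have hnear : ∀ᶠ x' in 𝓝 x, ∀ k, x' k < x k + 1 / (n + 1) / 2 :=
    eventually_all.2 fun k =>
      (continuous_apply k).continuousAt.eventually_lt continuousAt_const (by linarith)
  filter_upwards [hnear] with x' hx'
  calc uscEnvelope F x' ≤ F fun k => x' k + 1 / (n + 1) / 2 :=
        uscEnvelope_le hF hF₀ (by positivity) x'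
    _ ≤ F fun k => x k + 1 / (n + 1) := hF fun k => by linarith [hx' k]
    _ < y := hn

end Envelope

namespace IsEMerging

variable {K : ℕ} {F : (Fin K → ℝ) → ℝ} {Ω : Type} [MeasurableSpace Ω] {Q : Measure Ω}
  [IsProbabilityMeasure Q] {E : Fin K → Ω → ℝ}

theorem bddBelow_range (hF : IsEMerging K F) : BddBelow (range F) :=
  ⟨0, forall_mem_range.2 hF.2.2.1⟩

/-- Mixing `Q` with weight `c⁻¹` and a point mass where all `E k` vanish yields a family
with expectations at most one. -/
theorem lintegral_le_of_forall_lintegral_le (hF : IsEMerging K F)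
    (hEm : ∀ k, Measurable (E k)) (hE₀ : ∀ k ω, 0 ≤ E k ω) {c : ℝ≥0∞} (hc : 1 ≤ c)
    (hEc : ∀ k, ∫⁻ ω, ENNReal.ofReal (E k ω) ∂Q ≤ c) :
    ∫⁻ ω, ENNReal.ofReal (F fun k => E k ω) ∂Q ≤ c := by
  rcases eq_or_ne c ∞ with rfl | hc_top
  · exact le_top
  have hc₀ : c ≠ 0 := (zero_lt_one.trans_le hc).ne'
  let μ : Measure (Ω ⊕ Unit) := c⁻¹ • Q.map Sum.inl + (1 - c⁻¹) • Measure.dirac (Sum.inr ())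
  have hμ : IsProbabilityMeasure μ := ⟨by
    simp [μ, Measure.map_apply measurable_inl MeasurableSet.univ,
      add_tsub_cancel_of_le (ENNReal.inv_le_one.2 hc)]⟩
  have lintegral_μ (g : Ω ⊕ Unit → ℝ≥0∞) (hg : Measurable g) :
      ∫⁻ x, g x ∂μ = c⁻¹ * ∫⁻ ω, g (.inl ω) ∂Q + (1 - c⁻¹) * g (.inr ()) := by
    rw [lintegral_add_measure, lintegral_smul_measure, lintegral_smul_measure,
      lintegral_map hg measurable_inl, lintegral_dirac' _ hg]
    rfl
  let E' : Fin K → Ω ⊕ Unit → ℝ := fun k => Sum.elim (E k) 0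
  have hE'm (k) : Measurable (E' k) := (hEm k).sumElim measurable_const
  have hE'₀ (k) : ∀ x, 0 ≤ E' k x := Sum.rec (hE₀ k) fun _ => le_rfl
  have hE'1 (k) : ∫⁻ x, ENNReal.ofReal (E' k x) ∂μ ≤ 1 := by
    rw [lintegral_μ _ (hE'm k).ennreal_ofReal]
    calc c⁻¹ * ∫⁻ ω, ENNReal.ofReal (E k ω) ∂Q + (1 - c⁻¹) * ENNReal.ofReal 0
        ≤ c⁻¹ * c + 0 := by gcongr; exacts [hEc k, by simp]
      _ = 1 := by rw [add_zero, ENNReal.inv_mul_cancel hc₀ hc_top]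
  have hmix := hF.2.2.2 _ μ hμ E' hE'm hE'₀ hE'1
  rw [lintegral_μ (fun x => ENNReal.ofReal (F fun k => E' k x))
    (hF.2.1.comp (measurable_pi_lambda _ hE'm)).ennreal_ofReal] at hmix
  simpa [E'] using (ENNReal.inv_mul_le_iff hc₀ hc_top).1 (le_self_add.trans hmix)

theorem lintegral_add_const_le (hF : IsEMerging K F) (hEm : ∀ k, Measurable (E k))
    (hE₀ : ∀ k ω, 0 ≤ E k ω) (hE1 : ∀ k, ∫⁻ ω, ENNReal.ofReal (E k ω) ∂Q ≤ 1)
    {ε : ℝ} (hε : 0 ≤ ε) :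
    ∫⁻ ω, ENNReal.ofReal (F fun k => E k ω + ε) ∂Q ≤ 1 + ENNReal.ofReal ε := by
  refine hF.lintegral_le_of_forall_lintegral_le (fun k => (hEm k).add_const ε)
    (fun k ω => add_nonneg (hE₀ k ω) hε) le_self_add fun k => ?_
  simp_rw [ENNReal.ofReal_add (hE₀ k _) hε]
  rw [lintegral_add_right _ measurable_const, lintegral_const, measure_univ, mul_one]
  gcongr
  exact hE1 k

theorem uscEnvelope (hF : IsEMerging K F) : IsEMerging K (uscEnvelope F) := by
  have hF₀ := hF.bddBelow_range
  refine ⟨monotone_uscEnvelope hF.1 hF₀, hF.2.1.uscEnvelope,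
    fun e => le_ciInf fun _ => hF.2.2.1 _, fun Ω _ Q _ E hEm hE₀ hE1 => ?_⟩
  refine ENNReal.le_of_forall_pos_le_add fun ε hε _ => ?_
  calc ∫⁻ ω, ENNReal.ofReal (_root_.uscEnvelope F fun k => E k ω) ∂Q
      ≤ ∫⁻ ω, ENNReal.ofReal (F fun k => E k ω + ε) ∂Q :=
        lintegral_mono fun ω => ENNReal.ofReal_le_ofReal (uscEnvelope_le hF.1 hF₀ hε _)
    _ ≤ 1 + ENNReal.ofReal ε := hF.lintegral_add_const_le hEm hE₀ hE1 ε.2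
    _ = 1 + ε := by rw [ENNReal.ofReal_coe_nnreal]

end IsEMerging

/-- an admissible e-merging function is upper semicontinuous on
`[0,∞)^K`. -/
theorem admissible_e_merging_usc
    (K : ℕ) (F : (Fin K → ℝ) → ℝ) (hF : IsAdmissibleEMerging K F) :
    UpperSemicontinuousOn F {e : Fin K → ℝ | ∀ k, 0 ≤ e k} := by
  obtain ⟨hFe, hmax⟩ := hF
  have heq : EqOn (uscEnvelope F) F {e | ∀ k, 0 ≤ e k} := fun e he => by
    by_contra hne
    exact hmax ⟨_, hFe.uscEnvelope, fun e _ => le_uscEnvelope hFe.1 e, e, he,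
      (le_uscEnvelope hFe.1 e).lt_of_ne (Ne.symm hne)⟩
  have husc := upperSemicontinuous_uscEnvelope hFe.1 hFe.bddBelow_range
  exact fun x hx => (husc.upperSemicontinuousWithinAt _ x).congr_of_eventuallyEq hx
    (eventually_mem_nhdsWithin.mono heq)
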